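/- Let X ∈ ℝ^{n×d} have full column rank with rows x₁ᵀ,…,x_nᵀ, let Q = XᵀX, and let δ ∈ {0,1}ⁿ with M(δ) = Σᵢ δᵢ xᵢxᵢᵀ positive definite. Let κ(Q) = λ_max(Q)/λ_min(Q) and suppose λ_min(M(δ)) ≥ C > 0. Then Tr[M(δ)⁻¹] ≤ (1/λ_min(Q)) [ d + (κ(Q)/C) Σᵢ (1 − δᵢ) ‖xᵢ‖₂² ]. -/

import Mathlib

open Matrix

/-! With `Q = XᵀX` and `M = M(δ)`, we have `Q - M = ∑ᵢ (1 - δᵢ) xᵢxᵢᵀ`, so the identity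
`M⁻¹ - Q⁻¹ = M⁻¹ (Q - M) Q⁻¹` gives `Tr M⁻¹ = Tr Q⁻¹ + ∑ᵢ (1 - δᵢ) xᵢᵀ Q⁻¹ M⁻¹ xᵢ`.
Both kinds of terms are controlled by the Rayleigh bound `λ_min(A) ‖y‖² ≤ yᵀ A y`: applied to
`y = A⁻¹ v` together with Cauchy–Schwarz it yields `λ_min(A) ‖A⁻¹ v‖ ≤ ‖v‖`. Hence every diagonal
entry of `Q⁻¹` is at most `1 / λ_min(Q)`, every cross term is at most
`‖xᵢ‖² / (λ_min(Q) λ_min(M)) ≤ ‖xᵢ‖² / (λ_min(Q) C)`, and `κ(Q) ≥ 1` absorbs the rest. -/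

namespace Matrix

variable {m ι R : Type*}

theorem transpose_mul_self_eq_sum_vecMulVec [Fintype ι] [CommSemiring R] (X : Matrix ι m R) :
    Xᵀ * X = ∑ i, vecMulVec (X i) (X i) := by
  ext a b
  simp [mul_apply, vecMulVec_apply, sum_apply]

variable [Fintype m]

theorem trace_inv_eq_trace_inv_add_sum [DecidableEq m] [Fintype ι] [CommRing R]
    {M Q : Matrix m m R} (hM : IsUnit M) (hQ : IsUnit Q) (c : ι → R) (x : ι → m → R)
    (hQM : Q - M = ∑ i, c i • vecMulVec (x i) (x i)) :
    trace M⁻¹ = trace Q⁻¹ + ∑ i, c i * (x i ⬝ᵥ (Q⁻¹ * M⁻¹) *ᵥ x i) := by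
  have hsub : M⁻¹ - Q⁻¹ = M⁻¹ * (Q - M) * Q⁻¹ := inv_sub_inv (iff_of_true hM hQ)
  rw [← sub_eq_iff_eq_add', ← trace_sub, hsub, trace_mul_cycle, hQM, Finset.mul_sum, trace_sum]
  refine Finset.sum_congr rfl fun i _ => ?_
  rw [mul_smul_comm, trace_smul, mul_vecMulVec, trace_vecMulVec, dotProduct_comm, smul_eq_mul]

theorem dotProduct_self_nonneg (v : m → ℝ) : 0 ≤ v ⬝ᵥ v := by
  simpa using dotProduct_self_star_nonneg v

theorem dotProduct_le_sqrt_mul_sqrt (u v : m → ℝ) :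
    u ⬝ᵥ v ≤ √(u ⬝ᵥ u) * √(v ⬝ᵥ v) := by
  simpa [dotProduct, sq] using Real.sum_mul_le_sqrt_mul_sqrt Finset.univ u v

variable [DecidableEq m]

open scoped MatrixOrder in
theorem IsHermitian.iInf_eigenvalues_mul_dotProduct_self_le {A : Matrix m m ℝ}
    (hA : A.IsHermitian) (v : m → ℝ) :
    (⨅ j, hA.eigenvalues j) * (v ⬝ᵥ v) ≤ v ⬝ᵥ A *ᵥ v := by
  have hle : algebraMap ℝ _ (⨅ j, hA.eigenvalues j) ≤ A := by
    rw [algebraMap_le_iff_le_spectrum (ha := hA.isSelfAdjoint),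
      hA.spectrum_real_eq_range_eigenvalues]
    rintro _ ⟨j, rfl⟩
    exact ciInf_le (Set.finite_range _).bddBelow j
  simpa [sub_mulVec, dotProduct_sub, Algebra.algebraMap_eq_smul_one, smul_mulVec, one_mulVec,
    dotProduct_smul, sub_nonneg] using (le_iff.mp hle).dotProduct_mulVec_nonneg v

namespace PosDef

variable {A : Matrix m m ℝ} (hA : A.PosDef)
include hA

theorem iInf_eigenvalues_nonneg : 0 ≤ ⨅ j, hA.1.eigenvalues j :=
  Real.iInf_nonneg fun j => (hA.eigenvalues_pos j).le

theorem iInf_eigenvalues_pos [Nonempty m] : 0 < ⨅ j, hA.1.eigenvalues j := by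
  obtain ⟨j, hj⟩ := Finite.exists_min hA.1.eigenvalues
  exact (hA.eigenvalues_pos j).trans_le (le_ciInf hj)

theorem iInf_eigenvalues_mul_sqrt_inv_mulVec_le (v : m → ℝ) :
    (⨅ j, hA.1.eigenvalues j) * √(A⁻¹ *ᵥ v ⬝ᵥ A⁻¹ *ᵥ v) ≤ √(v ⬝ᵥ v) := by
  set y := A⁻¹ *ᵥ v
  have hAy : A *ᵥ y = v := by
    rw [mulVec_mulVec, mul_nonsing_inv A ((isUnit_iff_isUnit_det A).mp hA.isUnit), one_mulVec]
  have h : (⨅ j, hA.1.eigenvalues j) * (y ⬝ᵥ y) ≤ √(y ⬝ᵥ y) * √(v ⬝ᵥ v) :=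
    calc (⨅ j, hA.1.eigenvalues j) * (y ⬝ᵥ y) ≤ y ⬝ᵥ A *ᵥ y :=
          hA.1.iInf_eigenvalues_mul_dotProduct_self_le y
      _ = y ⬝ᵥ v := by rw [hAy]
      _ ≤ √(y ⬝ᵥ y) * √(v ⬝ᵥ v) := dotProduct_le_sqrt_mul_sqrt y v
  have hyy : √(y ⬝ᵥ y) * √(y ⬝ᵥ y) = y ⬝ᵥ y :=
    Real.mul_self_sqrt (dotProduct_self_nonneg y)
  rcases (Real.sqrt_nonneg (y ⬝ᵥ y)).eq_or_lt with hy | hy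
  · rw [← hy, mul_zero]
    exact Real.sqrt_nonneg _
  · refine le_of_mul_le_mul_right ?_ hy
    rw [mul_assoc, hyy, mul_comm √(v ⬝ᵥ v)]
    exact h

theorem iInf_eigenvalues_mul_dotProduct_inv_mulVec_le (u w : m → ℝ) :
    (⨅ j, hA.1.eigenvalues j) * (u ⬝ᵥ A⁻¹ *ᵥ w) ≤ √(u ⬝ᵥ u) * √(w ⬝ᵥ w) :=
  calc (⨅ j, hA.1.eigenvalues j) * (u ⬝ᵥ A⁻¹ *ᵥ w)
      ≤ (⨅ j, hA.1.eigenvalues j) * (√(u ⬝ᵥ u) * √(A⁻¹ *ᵥ w ⬝ᵥ A⁻¹ *ᵥ w)) :=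
        mul_le_mul_of_nonneg_left (dotProduct_le_sqrt_mul_sqrt _ _) hA.iInf_eigenvalues_nonneg
    _ = √(u ⬝ᵥ u) * ((⨅ j, hA.1.eigenvalues j) * √(A⁻¹ *ᵥ w ⬝ᵥ A⁻¹ *ᵥ w)) := by ring
    _ ≤ √(u ⬝ᵥ u) * √(w ⬝ᵥ w) :=
        mul_le_mul_of_nonneg_left (hA.iInf_eigenvalues_mul_sqrt_inv_mulVec_le w)
          (Real.sqrt_nonneg _)

theorem iInf_eigenvalues_mul_trace_inv_le :
    (⨅ j, hA.1.eigenvalues j) * trace A⁻¹ ≤ Fintype.card m := by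
  have hdiag (j : m) : (⨅ j, hA.1.eigenvalues j) * A⁻¹ j j ≤ 1 := by
    simpa using hA.iInf_eigenvalues_mul_dotProduct_inv_mulVec_le (Pi.single j 1) (Pi.single j 1)
  simpa [trace, Finset.mul_sum] using Finset.sum_le_sum fun j (_ : j ∈ Finset.univ) => hdiag j

theorem dotProduct_inv_mul_inv_mulVec_le {B : Matrix m m ℝ} (hB : B.PosDef) {c : ℝ} (hc : 0 ≤ c)
    (hcB : c ≤ ⨅ j, hB.1.eigenvalues j) (x : m → ℝ) :
    c * (⨅ j, hA.1.eigenvalues j) * (x ⬝ᵥ (A⁻¹ * B⁻¹) *ᵥ x) ≤ x ⬝ᵥ x := by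
  have hA' := hA.iInf_eigenvalues_mul_dotProduct_inv_mulVec_le x (B⁻¹ *ᵥ x)
  have hB' := hB.iInf_eigenvalues_mul_sqrt_inv_mulVec_le x
  rw [← mulVec_mulVec]
  calc c * (⨅ j, hA.1.eigenvalues j) * (x ⬝ᵥ A⁻¹ *ᵥ B⁻¹ *ᵥ x)
      ≤ c * (√(x ⬝ᵥ x) * √(B⁻¹ *ᵥ x ⬝ᵥ B⁻¹ *ᵥ x)) := by
        rw [mul_assoc]; exact mul_le_mul_of_nonneg_left hA' hc
    _ ≤ √(x ⬝ᵥ x) * ((⨅ j, hB.1.eigenvalues j) * √(B⁻¹ *ᵥ x ⬝ᵥ B⁻¹ *ᵥ x)) := by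
        rw [mul_left_comm]
        exact mul_le_mul_of_nonneg_left
          (mul_le_mul_of_nonneg_right hcB (Real.sqrt_nonneg _)) (Real.sqrt_nonneg _)
    _ ≤ √(x ⬝ᵥ x) * √(x ⬝ᵥ x) := mul_le_mul_of_nonneg_left hB' (Real.sqrt_nonneg _)
    _ = x ⬝ᵥ x := Real.mul_self_sqrt (dotProduct_self_nonneg x)

end PosDef

end Matrix

/-- Theorem 2 of the paper: upper bound on the A-optimality criterion `Tr[M(δ)⁻¹]`
for subsampled least squares. -/
theorem aopt_trace_bound {n d : ℕ} (hd : 0 < d)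
    (X : Matrix (Fin n) (Fin d) ℝ)
    (hQ : (Xᵀ * X).PosDef)
    (δ : Fin n → ℝ) (hδ : ∀ i, δ i = 0 ∨ δ i = 1)
    (hMδ : (∑ i, δ i • vecMulVec (X i) (X i)).PosDef)
    (C : ℝ) (hC : 0 < C)
    (hCmin : C ≤ ⨅ j, hMδ.1.eigenvalues j) :
    let lminQ : ℝ := ⨅ j, hQ.1.eigenvalues j
    let lmaxQ : ℝ := ⨆ j, hQ.1.eigenvalues j
    Matrix.trace (∑ i, δ i • vecMulVec (X i) (X i))⁻¹ ≤
      (1 / lminQ) *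
        ((d : ℝ) + (lmaxQ / lminQ) / C * ∑ i, (1 - δ i) * (X i ⬝ᵥ X i)) := by
  intro lminQ lmaxQ
  have : Nonempty (Fin d) := ⟨⟨0, hd⟩⟩
  have hlminQ : 0 < lminQ := hQ.iInf_eigenvalues_pos
  have hκ : 1 ≤ lmaxQ / lminQ := (one_le_div hlminQ).mpr <|
    ciInf_le_ciSup (Set.finite_range _).bddBelow (Set.finite_range _).bddAbove
  have hcoef (i : Fin n) : 0 ≤ 1 - δ i := by rcases hδ i with h | h <;> simp [h]
  have hdiff : Xᵀ * X - ∑ i, δ i • vecMulVec (X i) (X i) =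
      ∑ i, (1 - δ i) • vecMulVec (X i) (X i) := by
    simp only [transpose_mul_self_eq_sum_vecMulVec, ← Finset.sum_sub_distrib, sub_smul, one_smul]
  have hcross (i : Fin n) : X i ⬝ᵥ ((Xᵀ * X)⁻¹ * (∑ i, δ i • vecMulVec (X i) (X i))⁻¹) *ᵥ X i ≤
      (X i ⬝ᵥ X i) / (C * lminQ) :=
    (le_div_iff₀' (by positivity)).mpr (hQ.dotProduct_inv_mul_inv_mulVec_le hMδ hC.le hCmin _)
  set S := ∑ i, (1 - δ i) * (X i ⬝ᵥ X i)
  have hS : 0 ≤ S := Finset.sum_nonneg fun i _ => mul_nonneg (hcoef i) (dotProduct_self_nonneg _)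
  rw [trace_inv_eq_trace_inv_add_sum hMδ.isUnit hQ.isUnit _ _ hdiff]
  calc _ ≤ d / lminQ + S / (C * lminQ) := by
        refine add_le_add ((le_div_iff₀' hlminQ).mpr ?_) ?_
        · simpa using hQ.iInf_eigenvalues_mul_trace_inv_le
        · rw [Finset.sum_div]
          refine Finset.sum_le_sum fun i _ => ?_
          rw [mul_div_assoc]
          exact mul_le_mul_of_nonneg_left (hcross i) (hcoef i)
    _ ≤ d / lminQ + (lmaxQ / lminQ) * S / (C * lminQ) := by
        gcongr
        exact le_mul_of_one_le_left hS hκ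
    _ = _ := by field_simp
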